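/- arXiv:2508.13472 — 2 statements merged into one kernel-verified Lean document; each statement's English description precedes it below -/
import Mathlib

section
/- Let A be an n×n complex matrix that is Hermitian and positive semidefinite. Then the real part of the permanent of A, namely Re(∑_{σ ∈ S_n} ∏_{i=1}^n A_{i, σ(i)}), is at least the product of the diagonal entries: Re(∑_{σ ∈ S_n} ∏_{i=1}^n A_{i, σ(i)}) ≥ ∏_{i=1}^n Re(A_{i i}). (Marcus's permanent analogue of the Hadamard inequality, used by the paper as the special case of Conjecture D where one equivalence relation is discrete and the other indiscrete.) -/
/-!
Write `A = Bᴴ B`. Expanding the permanent along the first column and then along the first row gives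
`per A = A₀₀ per A₁₁ + ∑ₖ ∑ⱼ conj cₖ * cⱼ * per A(k|j)` with `cⱼ = A₀ⱼ`, where `A(k|j)` deletes
rows `0, k` and columns `0, j`. The matrix `(per A(k|j))ₖⱼ` is positive semidefinite: by the
Cauchy–Binet identity for permanents, `m! per (Uᴴ W) = ∑_f conj (per U_f) * per W_f` over all row
selections `f`, so it is a Gram matrix. Hence `A₀₀ per A₁₁ ≤ per A` in the order of `ℂ`, and
induction gives `∏ᵢ Aᵢᵢ ≤ per A`.
-/

open Matrix Finset
open scoped ComplexOrder

namespace Matrix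

variable {ι κ J R 𝕜 : Type*} [Fintype ι] [DecidableEq ι] [CommSemiring R] [RCLike 𝕜]

theorem permanent_conjTranspose [StarRing R] (A : Matrix ι ι R) :
    Aᴴ.permanent = star A.permanent := by
  rw [← permanent_transpose, permanent, permanent, star_sum]
  simp only [transpose_apply, conjTranspose_apply, star_prod]

theorem permanent_mul_eq_sum [Fintype κ] (X : Matrix ι κ R) (Y : Matrix κ ι R) :
    (X * Y).permanent = ∑ g : ι → κ, (X.submatrix id g).permanent * ∏ i, Y (g i) i := by
  simp only [permanent, mul_apply, Fintype.prod_sum, Finset.sum_mul, prod_mul_distrib]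
  exact Finset.sum_comm

theorem sum_permanent_submatrix_mul_permanent_submatrix [Fintype κ] (X : Matrix ι κ R)
    (Y : Matrix κ ι R) :
    ∑ f : ι → κ, (X.submatrix id f).permanent * (Y.submatrix f id).permanent =
      (Fintype.card ι).factorial • (X * Y).permanent := by
  -- substituting `f = g ∘ ρ⁻¹`, every `ρ` contributes one copy of `per (X * Y)`
  have key (ρ : Equiv.Perm ι) :
      ∑ f : ι → κ, (X.submatrix id f).permanent * ∏ i, Y (f (ρ i)) i = (X * Y).permanent := by
    rw [permanent_mul_eq_sum, ← Equiv.sum_comp (Equiv.arrowCongr ρ (Equiv.refl κ))]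
    refine Finset.sum_congr rfl fun g _ => ?_
    rw [← permanent_permute_rows ρ]
    simp [Function.comp_def]
  have hY (f : ι → κ) : (Y.submatrix f id).permanent = ∑ ρ : Equiv.Perm ι, ∏ i, Y (f (ρ i)) i :=
    rfl
  simp only [hY, Finset.mul_sum]
  rw [Finset.sum_comm]
  simp [key, Fintype.card_perm]

theorem posSemidef_permanent_conjTranspose_mul [Fintype κ] [Fintype J] (U : J → Matrix κ ι 𝕜) :
    (of fun j k => ((U j)ᴴ * U k).permanent).PosSemidef := by
  set P : Matrix (ι → κ) J 𝕜 := of fun f j => ((U j).submatrix f id).permanent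
  have hP : Pᴴ * P = (Fintype.card ι).factorial • of fun j k => ((U j)ᴴ * U k).permanent := by
    ext j k
    simp only [mul_apply, conjTranspose_apply, P, of_apply, ← permanent_conjTranspose,
      conjTranspose_submatrix, smul_apply]
    exact sum_permanent_submatrix_mul_permanent_submatrix _ _
  have hfac : (0 : ℝ) < (Fintype.card ι).factorial := by positivity
  convert (posSemidef_conjTranspose_mul_self P).smul (inv_nonneg.mpr hfac.le) using 1
  rw [hP, ← Nat.cast_smul_eq_nsmul ℝ, smul_smul, inv_mul_cancel₀ hfac.ne', one_smul]

open scoped MatrixOrder in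
theorem PosSemidef.posSemidef_permanent_submatrix [Fintype κ] [Fintype J] {A : Matrix κ κ 𝕜}
    (hA : A.PosSemidef) (r : J → ι → κ) :
    (of fun j k => (A.submatrix (r j) (r k)).permanent).PosSemidef := by
  classical
  obtain ⟨B, rfl⟩ := CStarAlgebra.nonneg_iff_eq_star_mul_self.mp hA.nonneg
  simpa [star_eq_conjTranspose, submatrix_mul _ _ _ id _ Function.bijective_id,
    conjTranspose_submatrix] using
    posSemidef_permanent_conjTranspose_mul fun j => B.submatrix id (r j)

theorem permanent_succ_column_zero {n : ℕ} (A : Matrix (Fin (n + 1)) (Fin (n + 1)) R) :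
    A.permanent = ∑ i, A i 0 * (A.submatrix i.succAbove Fin.succ).permanent := by
  rw [permanent, Finset.univ_perm_fin_succ, ← Finset.univ_product_univ]
  simp only [Finset.sum_map, Equiv.toEmbedding_apply, Finset.sum_product]
  refine Finset.sum_congr rfl fun i _ => Fin.cases ?_ (fun i => ?_) i
  · simp [Fin.prod_univ_succ, permanent, Finset.mul_sum]
  · rw [← permanent_permute_cols i.cycleRange, permanent, Finset.mul_sum]
    refine Finset.sum_congr rfl fun σ _ => ?_
    simp [Fin.prod_univ_succ, Fin.succAbove_cycleRange]

theorem permanent_succ_row_zero {n : ℕ} (A : Matrix (Fin (n + 1)) (Fin (n + 1)) R) :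
    A.permanent = ∑ j, A 0 j * (A.submatrix Fin.succ j.succAbove).permanent := by
  rw [← permanent_transpose, permanent_succ_column_zero]
  simp [← permanent_transpose (A.submatrix _ _)]

theorem permanent_succ_succ {n : ℕ} (A : Matrix (Fin (n + 2)) (Fin (n + 2)) R) :
    A.permanent = A 0 0 * (A.submatrix Fin.succ Fin.succ).permanent +
      ∑ k : Fin (n + 1), ∑ j : Fin (n + 1), A k.succ 0 * A 0 j.succ *
        (A.submatrix (Fin.succ ∘ k.succAbove) (Fin.succ ∘ j.succAbove)).permanent := by
  rw [permanent_succ_column_zero, Fin.sum_univ_succ]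
  congr 1
  refine Finset.sum_congr rfl fun k _ => ?_
  rw [permanent_succ_row_zero, Finset.mul_sum]
  refine Finset.sum_congr rfl fun j _ => ?_
  simp [mul_assoc, Function.comp_def, Fin.succ_succAbove_succ]

theorem PosSemidef.mul_permanent_submatrix_succ_le_permanent {n : ℕ}
    {A : Matrix (Fin (n + 1)) (Fin (n + 1)) 𝕜} (hA : A.PosSemidef) :
    A 0 0 * (A.submatrix Fin.succ Fin.succ).permanent ≤ A.permanent := by
  cases n with
  | zero => simp [permanent_isEmpty]
  | succ n =>
    rw [permanent_succ_succ A]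
    refine le_add_of_nonneg_right ?_
    have hG := hA.posSemidef_permanent_submatrix fun k : Fin (n + 1) => Fin.succ ∘ k.succAbove
    convert hG.dotProduct_mulVec_nonneg fun j => A 0 j.succ using 1
    simp only [dotProduct, mulVec, of_apply, Finset.mul_sum, Pi.star_apply]
    refine Finset.sum_congr rfl fun k _ => Finset.sum_congr rfl fun j _ => ?_
    rw [hA.1.apply]
    ring

theorem PosSemidef.prod_diag_le_permanent {n : ℕ} {A : Matrix (Fin n) (Fin n) 𝕜}
    (hA : A.PosSemidef) : ∏ i, A i i ≤ A.permanent := by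
  induction n with
  | zero => simp [permanent_isEmpty]
  | succ n ih =>
    calc ∏ i, A i i = A 0 0 * ∏ i, (A.submatrix Fin.succ Fin.succ) i i := Fin.prod_univ_succ _
      _ ≤ A 0 0 * (A.submatrix Fin.succ Fin.succ).permanent :=
        mul_le_mul_of_nonneg_left (ih (hA.submatrix _)) hA.diag_nonneg
      _ ≤ A.permanent := hA.mul_permanent_submatrix_succ_le_permanent

end Matrix

theorem re_permanent_ge_prod_diag_general (n : ℕ) (A : Matrix (Fin n) (Fin n) ℂ)
    (hA' : A.PosSemidef) :
    (∑ σ : Equiv.Perm (Fin n), ∏ i : Fin n, A i (σ i)).re ≥ ∏ i : Fin n, (A i i).re := by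
  have hper : ∑ σ : Equiv.Perm (Fin n), ∏ i, A i (σ i) = A.permanent := permanent_transpose A
  have hdiag : ∏ i, A i i = ((∏ i, (A i i).re : ℝ) : ℂ) := by
    rw [Complex.ofReal_prod]
    exact Finset.prod_congr rfl fun i _ => (hA'.1.coe_re_apply_self i).symm
  rw [hper, ge_iff_le, ← Complex.ofReal_re (∏ i, _), ← hdiag]
  exact Complex.re_le_re hA'.prod_diag_le_permanent

/-- Marcus's permanent analogue of the Hadamard inequality: for a Hermitian positive
semidefinite matrix `A`, the real part of the permanent of `A` is at least the
product of the diagonal entries. -/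
theorem re_permanent_ge_prod_diag (n : ℕ) (A : Matrix (Fin n) (Fin n) ℂ)
    (hA : A.IsHermitian) (hA' : A.PosSemidef) :
    (∑ σ : Equiv.Perm (Fin n), ∏ i : Fin n, A i (σ i)).re ≥ ∏ i : Fin n, (A i i).re :=
  re_permanent_ge_prod_diag_general n A hA'
end

section
/- Let ψ₁, ..., ψ_m be unit vectors in ℂ² and let A be their Gram matrix, A_{a b} = ⟨ψ_a, ψ_b⟩. Then Re(∑_{σ ∈ S_m} ∏_{a=1}^m A_{σ(a), a}) ≥ 1. (This is the concrete content of the paper's Corollary that Conjecture C holds for star graphs: the amplitude of a star-shaped tree is, up to complex conjugation, the permanent of the Gram matrix of the unit eigenvectors ψ_{e_a} attached to its edges, and this permanent has real part at least 1.) -/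
/-!
Let `Ψ` be the `2 × m` matrix with columns `ψ_a`, so that the Gram matrix is `Ψᴴ Ψ`, and let
`c_k` be the coefficients of `P = ∏_a (ψ_a(0) + ψ_a(1) X)`. Expanding the permanent of `Ψᴴ Ψ` over
maps `f : Fin m → Fin 2` and counting the permutations `σ` with `g ∘ σ = f` (a coset of a Young
subgroup) gives `per (Ψᴴ Ψ) = ∑_k k! (m - k)! ‖c_k‖²`, a real number. This weighted norm is
`m!` times the squared Bombieri norm of `P` as a binary form. Multiplication by a linear factor
`α + β X` with `‖α‖² + ‖β‖² = 1` acts on it as a creation operator, so by the commutation relation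
it does not decrease the norm. As `P` is a product of `m` such factors, its weighted norm is at
least that of the constant `1`, namely `1`.
-/

open Matrix Finset Polynomial
open scoped ComplexInnerProductSpace Nat ComplexConjugate

noncomputable section

section Permanent

variable {α ι R : Type*} [Fintype α] [DecidableEq α] [Fintype ι] [CommSemiring R]

theorem Matrix.permanent_mul (B : Matrix α ι R) (C : Matrix ι α R) :
    (B * C).permanent = ∑ g : α → ι, (B.submatrix id g).permanent * ∏ a, C (g a) a := by
  simp only [permanent, mul_apply, Fintype.prod_sum, submatrix_apply, id, sum_mul,
    prod_mul_distrib]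
  exact sum_comm

theorem Matrix.permanent_submatrix_id_eq_sum [DecidableEq ι] (B : Matrix α ι R) (g : α → ι) :
    (B.submatrix id g).permanent =
      ∑ f : α → ι, #{σ : Equiv.Perm α | g ∘ σ = f} • ∏ a, B a (f a) := by
  rw [← permanent_transpose, permanent, ← sum_fiberwise univ (fun σ : Equiv.Perm α => g ∘ σ)]
  refine sum_congr rfl fun f _ => ?_
  rw [← sum_const]
  exact sum_congr rfl fun σ hσ => by rw [← (mem_filter.1 hσ).2]; rfl

end Permanent

section Counting

variable {α ι : Type*} [Fintype α] [DecidableEq ι]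

theorem card_fiber_comp_perm (f : α → ι) (σ : Equiv.Perm α) (i : ι) :
    #{a | f (σ a) = i} = #{a | f a = i} :=
  card_equiv σ fun a => by simp

variable [DecidableEq α]

theorem card_perm_comp_eq_of_card_fiber_ne {f g : α → ι} {i : ι}
    (h : #{a | g a = i} ≠ #{a | f a = i}) :
    #{σ : Equiv.Perm α | g ∘ σ = f} = 0 := by
  refine card_eq_zero.2 (filter_eq_empty_iff.2 fun σ _ hσ => h ?_)
  rw [← hσ, ← card_fiber_comp_perm g σ]
  rfl

theorem card_perm_comp_eq_of_card_fiber_eq [Fintype ι] {f g : α → ι}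
    (h : ∀ i, #{a | g a = i} = #{a | f a = i}) :
    #{σ : Equiv.Perm α | g ∘ σ = f} = ∏ i, (#{a | g a = i})! := by
  obtain ⟨τ, hτ⟩ : ∃ τ : Equiv.Perm α, g ∘ τ = f := by
    have e : ∀ i, {a // f a = i} ≃ {a // g a = i} := fun i =>
      Fintype.equivOfCardEq (by simp only [Fintype.card_subtype, h])
    exact ⟨Equiv.ofFiberEquiv e, funext (Equiv.ofFiberEquiv_map e)⟩
  have e : {ρ : Equiv.Perm α // f ∘ ρ = f} ≃ {σ : Equiv.Perm α // g ∘ σ = f} :=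
    (Equiv.mulLeft τ).subtypeEquiv fun ρ => by
      simp [Equiv.Perm.coe_mul, ← Function.comp_assoc, hτ]
  rw [← Fintype.card_subtype, ← Fintype.card_congr e, DomMulAct.stabilizer_card]
  simp only [Fintype.card_subtype, h]

end Counting

section FinTwo

variable {α : Type*} [Fintype α]

theorem sum_val_fin_two (f : α → Fin 2) : ∑ a, (f a : ℕ) = #{a | f a = 1} := by
  rw [card_filter]
  exact sum_congr rfl fun a _ => by rcases Fin.exists_fin_two.1 ⟨f a, rfl⟩ with h | h <;> simp [h]

theorem card_filter_eq_zero_fin_two (f : α → Fin 2) :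
    #{a | f a = 0} = Fintype.card α - #{a | f a = 1} := by
  rw [← card_univ, ← card_filter_add_card_filter_not (s := univ) (fun a => f a = 1),
    add_tsub_cancel_left]
  congr! 3 with a
  omega

variable [DecidableEq α]

theorem coeff_prod_C_add_C_mul_X {R : Type*} [CommSemiring R] (v : Fin 2 → α → R) (k : ℕ) :
    (∏ a, (C (v 0 a) + C (v 1 a) * X)).coeff k =
      ∑ f : α → Fin 2 with #{a | f a = 1} = k, ∏ a, v (f a) a := by
  have h : ∀ a, C (v 0 a) + C (v 1 a) * X = ∑ i : Fin 2, C (v i a) * X ^ (i : ℕ) := by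
    simp [Fin.sum_univ_two]
  simp_rw [h, Fintype.prod_sum, prod_mul_distrib, ← map_prod, prod_pow_eq_pow_sum,
    finsetSum_coeff, coeff_C_mul_X_pow, sum_filter, sum_val_fin_two, eq_comm]

theorem card_perm_comp_eq_fin_two (f g : α → Fin 2) :
    #{σ : Equiv.Perm α | g ∘ σ = f} = if #{a | f a = 1} = #{a | g a = 1}
      then (#{a | g a = 1})! * (Fintype.card α - #{a | g a = 1})! else 0 := by
  split_ifs with h
  · rw [card_perm_comp_eq_of_card_fiber_eq fun i => ?_, Fin.prod_univ_two,
      card_filter_eq_zero_fin_two, mul_comm]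
    fin_cases i
    · simp only [Fin.zero_eta, card_filter_eq_zero_fin_two, h]
    · exact h.symm
  · exact card_perm_comp_eq_of_card_fiber_ne (Ne.symm h)

end FinTwo

/-- The squared norm of the binary form `∑ c_k x^k y^(n-k)` for which the monomials are orthogonal
with `‖x^k y^(n-k)‖² = k! (n-k)!`, i.e. `n!` times its squared Bombieri norm. -/
def weightedNormSq (n : ℕ) (p : ℂ[X]) : ℝ :=
  ∑ k ∈ range (n + 1), (k ! * (n - k)! : ℝ) * ‖p.coeff k‖ ^ 2

theorem permanent_conjTranspose_mul_fin_two {α : Type*} [Fintype α] [DecidableEq α]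
    (B : Matrix (Fin 2) α ℂ) :
    (Bᴴ * B).permanent = weightedNormSq (Fintype.card α) (∏ a, (C (B 0 a) + C (B 1 a) * X)) := by
  have hsub : ∀ g : α → Fin 2, (Bᴴ.submatrix id g).permanent =
      ((#{a | g a = 1})! * (Fintype.card α - #{a | g a = 1})! : ℂ) *
        conj ((∏ a, (C (B 0 a) + C (B 1 a) * X)).coeff #{a | g a = 1}) := by
    intro g
    rw [permanent_submatrix_id_eq_sum, coeff_prod_C_add_C_mul_X B, map_sum, mul_sum, sum_filter]
    refine sum_congr rfl fun f _ => ?_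
    rw [card_perm_comp_eq_fin_two]
    split_ifs <;> simp [conjTranspose_apply, map_prod]
  rw [permanent_mul, ← sum_fiberwise_of_maps_to (t := range (Fintype.card α + 1))
    (g := fun g : α → Fin 2 => #{a | g a = 1}) fun g _ => mem_range_succ_iff.2 (card_le_univ _)]
  simp only [weightedNormSq, Complex.ofReal_sum]
  refine sum_congr rfl fun k _ => ?_
  rw [sum_congr rfl fun g hg => by rw [hsub, (mem_filter.1 hg).2], ← mul_sum,
    ← coeff_prod_C_add_C_mul_X B, mul_assoc, Complex.conj_mul']
  push_cast
  rfl

theorem norm_mul_add_mul_sq_identity (u v : ℝ) (a b x y : ℂ) :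
    u * v * (‖a * x‖ ^ 2 + ‖b * y‖ ^ 2) + ‖u * conj b * x + v * conj a * y‖ ^ 2 =
      u * v * ‖a * x + b * y‖ ^ 2 + u ^ 2 * ‖b * x‖ ^ 2 + v ^ 2 * ‖a * y‖ ^ 2 := by
  apply Complex.ofReal_injective
  push_cast
  simp only [← Complex.conj_mul', map_add, map_mul, Complex.conj_conj, Complex.conj_ofReal]
  ring

/-- Coefficientwise form of `weightedNormSq_le_mul_linear`: there `x = p_k`, `y = p_(k-1)`, and
`a x + b y` is the `k`-th coefficient of `p * (C a + C b * X)`. -/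
theorem factorial_mul_norm_sq_le {n k : ℕ} (hk : k ≤ n + 1) {a b x y : ℂ}
    (hx : k = n + 1 → x = 0) (hy : k = 0 → y = 0) :
    (k ! * (n + 1 - k)! : ℝ) * (‖a * x‖ ^ 2 + ‖b * y‖ ^ 2) ≤
      (k ! * (n + 1 - k)! : ℝ) * ‖a * x + b * y‖ ^ 2 + k * (k ! * (n - k)!) * ‖b * x‖ ^ 2 +
        (n + 1 - k : ℕ) * ((k - 1)! * (n - (k - 1))!) * ‖a * y‖ ^ 2 := by
  rcases Nat.eq_zero_or_pos k with rfl | hk0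
  · simp [hy rfl]
  rcases hk.eq_or_lt with rfl | hkn
  · simp [hx rfl]
  obtain ⟨j, rfl⟩ : ∃ j, k = j + 1 := ⟨k - 1, by omega⟩
  obtain ⟨i, rfl⟩ : ∃ i, n = j + 1 + i := ⟨n - (j + 1), by omega⟩
  have key := norm_mul_add_mul_sq_identity (j + 1) (i + 1) a b x y
  rw [show j + 1 + i + 1 - (j + 1) = i + 1 by omega, show j + 1 + i - (j + 1) = i by omega,
    Nat.add_sub_cancel, show j + 1 + i - j = i + 1 by omega]
  simp only [Nat.factorial_succ]
  push_cast at key ⊢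
  have hw : 0 ≤ (j ! * i ! : ℝ) * ‖(j + 1 : ℂ) * conj b * x + (i + 1 : ℂ) * conj a * y‖ ^ 2 := by
    positivity
  linear_combination hw + (j ! * i ! : ℝ) * key

theorem weightedNormSq_le_mul_linear {n : ℕ} {p : ℂ[X]} (hp : p.natDegree ≤ n) {a b : ℂ}
    (hab : ‖a‖ ^ 2 + ‖b‖ ^ 2 = 1) :
    weightedNormSq n p ≤ weightedNormSq (n + 1) (p * (C a + C b * X)) := by
  set c := p.coeff
  set d := (X * p).coeff
  have hc : c (n + 1) = 0 := coeff_eq_zero_of_natDegree_lt (by omega)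
  have hd0 : d 0 = 0 := coeff_X_mul_zero p
  have hd : ∀ k, d (k + 1) = c k := coeff_X_mul p
  have hq : ∀ k, (p * (C a + C b * X)).coeff k = a * c k + b * d k := fun k => by
    rw [show p * (C a + C b * X) = C a * p + C b * (X * p) by ring, coeff_add, coeff_C_mul,
      coeff_C_mul]
  let A (k : ℕ) : ℝ :=
    (k ! * (n + 1 - k)! : ℝ) * ‖a * c k‖ ^ 2 - k * (k ! * (n - k)!) * ‖b * c k‖ ^ 2
  let B (k : ℕ) : ℝ := (k ! * (n + 1 - k)! : ℝ) * ‖b * d k‖ ^ 2 -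
    (n + 1 - k : ℕ) * ((k - 1)! * (n - (k - 1))!) * ‖a * d k‖ ^ 2
  have hAB : ∀ k ≤ n, A k + B (k + 1) = (k ! * (n - k)! : ℝ) * ‖c k‖ ^ 2 := by
    intro k hk
    obtain ⟨i, rfl⟩ := Nat.exists_eq_add_of_le hk
    simp only [A, B, hd, show k + i + 1 - k = i + 1 by omega, show k + i - k = i by omega,
      show k + i + 1 - (k + 1) = i by omega, Nat.add_sub_cancel, norm_mul, Nat.factorial_succ]
    push_cast
    linear_combination (k ! * i ! * ‖c k‖ ^ 2 : ℝ) * hab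
  calc weightedNormSq n p = ∑ k ∈ range (n + 2), (A k + B k) := by
        have hA : A (n + 1) = 0 := by simp [A, hc]
        have hB : B 0 = 0 := by simp [B, hd0]
        rw [sum_add_distrib, sum_range_succ, sum_range_succ' B, hA, hB, add_zero, add_zero,
          ← sum_add_distrib, weightedNormSq]
        exact (sum_congr rfl fun k hk => hAB k (mem_range_succ_iff.1 hk)).symm
    _ ≤ weightedNormSq (n + 1) (p * (C a + C b * X)) := by
        refine sum_le_sum fun k hk => ?_
        have := factorial_mul_norm_sq_le (mem_range_succ_iff.1 hk) (a := a) (b := b)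
          (fun h => h ▸ hc) (fun h => h ▸ hd0)
        rw [hq]
        simp only [A, B]
        linarith

theorem one_le_weightedNormSq_prod {α : Type*} [DecidableEq α] (s : Finset α) (a b : α → ℂ)
    (h : ∀ i ∈ s, ‖a i‖ ^ 2 + ‖b i‖ ^ 2 = 1) :
    1 ≤ weightedNormSq #s (∏ i ∈ s, (C (a i) + C (b i) * X)) := by
  induction s using Finset.induction_on with
  | empty => simp [weightedNormSq]
  | insert i s hi ih =>
    have hlin : ∀ j, (C (a j) + C (b j) * X).natDegree ≤ 1 := fun j => by
      rw [add_comm]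
      exact natDegree_linear_le
    have hdeg : (∏ j ∈ s, (C (a j) + C (b j) * X)).natDegree ≤ #s :=
      (natDegree_prod_le _ _).trans ((sum_le_sum fun j _ => hlin j).trans_eq (by simp))
    rw [prod_insert hi, card_insert_of_notMem hi, mul_comm]
    exact (ih fun j hj => h j (mem_insert_of_mem hj)).trans
      (weightedNormSq_le_mul_linear hdeg (h i (mem_insert_self i s)))

/-- If `ψ₁, …, ψ_m` are unit vectors in `ℂ²` and `A` is their Gram matrix
`A_{a b} = ⟨ψ_a, ψ_b⟩`, then the permanent `∑_{σ} ∏_a A_{σ(a), a}` has real part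
at least `1`. -/
theorem re_permanent_gram_ge_one (m : ℕ) (ψ : Fin m → EuclideanSpace ℂ (Fin 2))
    (hψ : ∀ a, ‖ψ a‖ = 1) (A : Matrix (Fin m) (Fin m) ℂ)
    (hA : ∀ a b, A a b = ⟪ψ a, ψ b⟫) :
    (∑ σ : Equiv.Perm (Fin m), ∏ a : Fin m, A (σ a) a).re ≥ 1 := by
  set Ψ : Matrix (Fin 2) (Fin m) ℂ := Matrix.of fun i a => ψ a i
  have hgram : A = Ψᴴ * Ψ := by
    ext a b
    simp [Ψ, hA, mul_apply, PiLp.inner_apply, mul_comm]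
  have hunit : ∀ a, ‖ψ a 0‖ ^ 2 + ‖ψ a 1‖ ^ 2 = 1 := fun a => by
    simpa [EuclideanSpace.norm_eq, Fin.sum_univ_two] using hψ a
  change 1 ≤ A.permanent.re
  rw [hgram, permanent_conjTranspose_mul_fin_two, Complex.ofReal_re]
  simpa [Ψ] using one_le_weightedNormSq_prod univ (fun a => ψ a 0) (fun a => ψ a 1)
    fun a _ => hunit a
end
end
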